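/- The partial derivative of the normalized Bachelier call price with respect to the volatility (the Vega) is ∂c_b(y,σ)/∂σ = φ(-y/σ), which is strictly positive for all y ∈ ℝ and σ > 0. -/

import Mathlib

/-!
Writing `u = -y/σ`, the price is a perspective function: `c_b(y, σ) = σ ψ(u)` with
`ψ(u) = u Φ(u) + φ(u)`. Since `φ' = -u φ`, we get `ψ' = Φ`, and the derivative of a
perspective `σ ↦ σ ψ(c/σ)` is `ψ(u) - u ψ'(u)`, which here is `φ(u)`.
-/

open MeasureTheory ProbabilityTheory Real

noncomputable def normalPdf (x : ℝ) : ℝ := (Real.sqrt (2 * Real.pi))⁻¹ * Real.exp (-(x ^ 2) / 2)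

noncomputable def normalCdf (x : ℝ) : ℝ := ∫ t in Set.Iic x, normalPdf t

noncomputable def cb (y σ : ℝ) : ℝ := -y * normalCdf (-y / σ) + σ * normalPdf (-y / σ)

theorem HasDerivAt.perspective {𝕜 : Type*} [NontriviallyNormedField 𝕜] {f : 𝕜 → 𝕜} {f' c σ : 𝕜}
    (hσ : σ ≠ 0) (hf : HasDerivAt f f' (c / σ)) :
    HasDerivAt (fun s => s * f (c / s)) (f (c / σ) - c / σ * f') σ := by
  have hc : HasDerivAt (fun s => c / s) (-c / σ ^ 2) σ :=
    ((hasDerivAt_const σ c).div (hasDerivAt_id σ) hσ).congr_deriv (by simp)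
  exact ((hasDerivAt_id σ).mul (hf.comp σ hc)).congr_deriv
    (by simp only [Function.comp_apply, id]; field_simp; ring)

theorem hasDerivAt_integral_Iic {E : Type*} [NormedAddCommGroup E] [NormedSpace ℝ E]
    [CompleteSpace E] {f : ℝ → E} {x : ℝ} (hf : Integrable f) (hfx : ContinuousAt f x) :
    HasDerivAt (fun z => ∫ t in Set.Iic z, f t) (f x) x := by
  have hsplit : (fun z => ∫ t in Set.Iic z, f t) =
      fun z => (∫ t in Set.Iic 0, f t) + ∫ t in (0 : ℝ)..z, f t := by
    ext z
    rw [← intervalIntegral.integral_Iic_sub_Iic hf.integrableOn hf.integrableOn]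
    abel
  rw [hsplit]
  exact (intervalIntegral.integral_hasDerivAt_right hf.intervalIntegrable
    hf.aestronglyMeasurable.stronglyMeasurableAtFilter hfx).const_add _

theorem normalPdf_pos (x : ℝ) : 0 < normalPdf x := by
  unfold normalPdf
  positivity

theorem continuous_normalPdf : Continuous normalPdf := by
  unfold normalPdf
  fun_prop

theorem integrable_normalPdf : Integrable normalPdf := by
  refine ((integrable_exp_neg_mul_sq (b := 1 / 2) (by norm_num)).const_mul
    (Real.sqrt (2 * Real.pi))⁻¹).congr (Filter.Eventually.of_forall fun x => ?_)
  simp only [normalPdf]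
  ring_nf

theorem hasDerivAt_normalPdf (x : ℝ) : HasDerivAt normalPdf (-x * normalPdf x) x := by
  have hexp : HasDerivAt (fun t : ℝ => -(t ^ 2) / 2) (-x) x :=
    ((hasDerivAt_pow 2 x).neg.div_const 2).congr_deriv (by ring)
  exact (hexp.exp.const_mul _).congr_deriv (by simp only [normalPdf]; ring)

theorem hasDerivAt_normalCdf (x : ℝ) : HasDerivAt normalCdf (normalPdf x) x :=
  hasDerivAt_integral_Iic integrable_normalPdf continuous_normalPdf.continuousAt

theorem hasDerivAt_mul_normalCdf_add_normalPdf (u : ℝ) :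
    HasDerivAt (fun v => v * normalCdf v + normalPdf v) (normalCdf u) u :=
  (((hasDerivAt_id u).mul (hasDerivAt_normalCdf u)).add (hasDerivAt_normalPdf u)).congr_deriv
    (by simp only [id]; ring)

theorem cb_eq_mul (y : ℝ) {s : ℝ} (hs : s ≠ 0) :
    cb y s = s * (-y / s * normalCdf (-y / s) + normalPdf (-y / s)) := by
  simp only [cb]
  field_simp

theorem cb_vega (y σ : ℝ) (hσ : 0 < σ) :
    HasDerivAt (fun s => cb y s) (normalPdf (-y / σ)) σ ∧ 0 < normalPdf (-y / σ) := by
  refine ⟨?_, normalPdf_pos _⟩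
  have hψ := (hasDerivAt_mul_normalCdf_add_normalPdf (-y / σ)).perspective hσ.ne'
  have hcb : (fun s => cb y s) =ᶠ[nhds σ]
      fun s => s * (-y / s * normalCdf (-y / s) + normalPdf (-y / s)) :=
    (eventually_ne_nhds hσ.ne').mono fun s hs => cb_eq_mul y hs
  exact (hψ.congr_of_eventuallyEq hcb).congr_deriv (by ring)
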